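/- Let b be a Schur-class L(J,K)-valued multiplier on 𝔹^d and X : H(b)^d → H(b) a row contraction on the de Branges–Rovnyak space H(b). Then X solves the Gleason problem (z₁(X₁*f)(z) + ... + z_d(X_d*f)(z) = f(z) - f(0) for all f ∈ H(b)) if and only if (I - Xz*)^{-1}k₀^b = k_z^b for all z ∈ 𝔹^d. -/

import Mathlib

open ContinuousLinearMap

set_option synthInstance.maxHeartbeats 1000000
set_option maxHeartbeats 1000000

noncomputable section

instance piLpComplete {d : ℕ} {H : Type*} [NormedAddCommGroup H]
    [InnerProductSpace ℂ H] [CompleteSpace H] :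
    CompleteSpace (PiLp 2 fun _ : Fin d => H) :=
  inferInstance

/-- The row operator `z : H^d → H`, `(h₁,...,h_d) ↦ Σ zⱼ hⱼ`, for a scalar row `z ∈ ℂ^d`. -/
def rowOp {d : ℕ} {H : Type*} [NormedAddCommGroup H] [InnerProductSpace ℂ H]
    (z : EuclideanSpace ℂ (Fin d)) : PiLp 2 (fun _ : Fin d => H) →L[ℂ] H :=
  ∑ j, z j • ((ContinuousLinearMap.proj j : (∀ _ : Fin d, H) →L[ℂ] H).comp
    (PiLp.continuousLinearEquiv 2 ℂ (fun _ : Fin d => H)).toContinuousLinearMap)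

/-- The column operator `z* : H → H^d`, `h ↦ (z̄₁ h, ..., z̄_d h)`; the adjoint of `rowOp z`. -/
def colOp {d : ℕ} {H : Type*} [NormedAddCommGroup H] [InnerProductSpace ℂ H]
    (z : EuclideanSpace ℂ (Fin d)) : H →L[ℂ] PiLp 2 (fun _ : Fin d => H) :=
  ((PiLp.continuousLinearEquiv 2 ℂ (fun _ : Fin d => H)).symm.toContinuousLinearMap).comp
    (ContinuousLinearMap.pi fun j => (starRingEnd ℂ (z j)) • ContinuousLinearMap.id ℂ H)

/-- Ampliation `A ⊗ I_d` of an operator `A : H → J` acting componentwise on columns. -/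
def liftD {d : ℕ} {H J : Type*} [NormedAddCommGroup H] [InnerProductSpace ℂ H]
    [NormedAddCommGroup J] [InnerProductSpace ℂ J] (A : H →L[ℂ] J) :
    PiLp 2 (fun _ : Fin d => H) →L[ℂ] PiLp 2 (fun _ : Fin d => J) :=
  ((PiLp.continuousLinearEquiv 2 ℂ (fun _ : Fin d => J)).symm.toContinuousLinearMap).comp <|
    (ContinuousLinearMap.pi fun j =>
      A.comp ((ContinuousLinearMap.proj j : (∀ _ : Fin d, H) →L[ℂ] H))).comp
    (PiLp.continuousLinearEquiv 2 ℂ (fun _ : Fin d => H)).toContinuousLinearMap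

open scoped InnerProductSpace

/-!
With `T = Xz*`, which is a strict contraction because `‖X‖ ≤ 1` and `‖z*‖ = ‖z‖ < 1`, the
Gleason identity at `z` is the adjoint form of `T k_z^b = k_z^b - k₀^b`, i.e. of
`(I - T) k_z^b = k₀^b`; since `I - T` is invertible (Neumann series), this is
`(I - T)⁻¹ k₀^b = k_z^b`.
-/

namespace ContinuousLinearMap

variable {𝕜 E F : Type*} [NontriviallyNormedField 𝕜]
  [NormedAddCommGroup E] [NormedSpace 𝕜 E] [NormedAddCommGroup F] [NormedSpace 𝕜 F]

theorem units_inv_comp_eq_iff (u : (E →L[𝕜] E)ˣ) (A B : F →L[𝕜] E) :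
    ↑u⁻¹ ∘L A = B ↔ A = ↑u ∘L B := by
  constructor
  · rintro rfl
    rw [← comp_assoc, ← mul_def, u.mul_inv, one_def, id_comp]
  · rintro rfl
    rw [← comp_assoc, ← mul_def, u.inv_mul, one_def, id_comp]

theorem inverse_one_sub_comp_eq_iff [CompleteSpace E] {T : E →L[𝕜] E} (hT : ‖T‖ < 1)
    (A B : F →L[𝕜] E) : Ring.inverse (1 - T) ∘L A = B ↔ T ∘L B = B - A := by
  rw [NormedRing.inverse_one_sub T hT, units_inv_comp_eq_iff, Units.val_oneSub, sub_comp,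
    one_def, id_comp, eq_sub_iff_add_eq, eq_sub_iff_add_eq']

end ContinuousLinearMap

section RowColumn

variable {d : ℕ} {H : Type*} [NormedAddCommGroup H] [InnerProductSpace ℂ H]

theorem rowOp_apply (z : EuclideanSpace ℂ (Fin d)) (g : PiLp 2 fun _ : Fin d => H) :
    rowOp z g = ∑ j, z j • g j := by
  simp [rowOp, sum_apply]

theorem colOp_apply (z : EuclideanSpace ℂ (Fin d)) (h : H) (j : Fin d) :
    colOp z h j = starRingEnd ℂ (z j) • h := rfl

theorem norm_colOp_apply (z : EuclideanSpace ℂ (Fin d)) (h : H) :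
    ‖colOp z h‖ = ‖z‖ * ‖h‖ := by
  refine (sq_eq_sq₀ (norm_nonneg _) (by positivity)).1 ?_
  simp only [PiLp.norm_sq_eq_of_L2, colOp_apply, norm_smul, RCLike.norm_conj, mul_pow,
    Finset.sum_mul]

theorem norm_colOp_le (z : EuclideanSpace ℂ (Fin d)) : ‖colOp (H := H) z‖ ≤ ‖z‖ :=
  opNorm_le_bound _ (norm_nonneg z) fun h => (norm_colOp_apply z h).le

theorem adjoint_colOp [CompleteSpace H] (z : EuclideanSpace ℂ (Fin d)) :
    adjoint (colOp (H := H) z) = rowOp z := by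
  refine ((eq_adjoint_iff _ _).2 fun g h => ?_).symm
  simp only [rowOp_apply, sum_inner, PiLp.inner_apply, colOp_apply, inner_smul_left,
    inner_smul_right]

theorem adjoint_comp_colOp_comp_apply {K : Type*} [NormedAddCommGroup K] [InnerProductSpace ℂ K]
    [CompleteSpace K] [CompleteSpace H] (X : PiLp 2 (fun _ : Fin d => H) →L[ℂ] H)
    (z : EuclideanSpace ℂ (Fin d)) (k : K →L[ℂ] H) (f : H) :
    adjoint (X ∘L colOp z ∘L k) f = ∑ j, z j • adjoint k ((adjoint X f) j) := by
  simp only [adjoint_comp, adjoint_colOp, comp_apply, rowOp_apply, map_sum, map_smul]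

theorem norm_comp_colOp_lt_one {X : PiLp 2 (fun _ : Fin d => H) →L[ℂ] H} (hX : ‖X‖ ≤ 1)
    {z : EuclideanSpace ℂ (Fin d)} (hz : ‖z‖ < 1) : ‖X ∘L colOp z‖ < 1 :=
  calc ‖X ∘L colOp z‖ ≤ ‖X‖ * ‖colOp (H := H) z‖ := opNorm_comp_le _ _
    _ ≤ 1 * ‖z‖ := mul_le_mul hX (norm_colOp_le z) (opNorm_nonneg _) zero_le_one
    _ < 1 := by rwa [one_mul]

end RowColumn

theorem stmt_15_general {d : ℕ} {K Hb : Type*}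
    [NormedAddCommGroup K] [InnerProductSpace ℂ K] [CompleteSpace K]
    [NormedAddCommGroup Hb] [InnerProductSpace ℂ Hb] [CompleteSpace Hb]
    (kb : EuclideanSpace ℂ (Fin d) → (K →L[ℂ] Hb))
    (X : PiLp 2 (fun _ : Fin d => Hb) →L[ℂ] Hb) (hX : ‖X‖ ≤ 1) :
    (∀ z : EuclideanSpace ℂ (Fin d), ‖z‖ < 1 → ∀ f : Hb,
        ∑ j, z j • ((adjoint (kb z)) (((adjoint X) f) j))
          = (adjoint (kb z)) f - (adjoint (kb 0)) f)
    ↔ (∀ z : EuclideanSpace ℂ (Fin d), ‖z‖ < 1 →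
        (Ring.inverse (1 - X ∘L colOp z) : Hb →L[ℂ] Hb) ∘L kb 0 = kb z) := by
  refine forall₂_congr fun z hz => ?_
  rw [inverse_one_sub_comp_eq_iff (norm_comp_colOp_lt_one hX hz), ← adjoint.injective.eq_iff,
    ContinuousLinearMap.ext_iff]
  simp only [← adjoint_comp_colOp_comp_apply, map_sub, sub_apply, comp_assoc]

/-- Let `H(b)` be the de Branges–Rovnyak space of a Schur multiplier `b`, with
point evaluations `k_z^b`, and let `X` be a row contraction on `H(b)`.  Then `X` solves the
Gleason problem (`Σ z_j (X_j^* f)(z) = f(z) - f(0)`) if and only if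
`(1 - Xz^*)⁻¹ k₀^b = k_z^b` for all `z ∈ 𝔹^d`. -/
theorem stmt_15 {d : ℕ} {J K Hb : Type*}
    [NormedAddCommGroup J] [InnerProductSpace ℂ J] [CompleteSpace J]
    [NormedAddCommGroup K] [InnerProductSpace ℂ K] [CompleteSpace K]
    [NormedAddCommGroup Hb] [InnerProductSpace ℂ Hb] [CompleteSpace Hb]
    (b : EuclideanSpace ℂ (Fin d) → (J →L[ℂ] K))
    (kb : EuclideanSpace ℂ (Fin d) → (K →L[ℂ] Hb))
    (hker : ∀ z w : EuclideanSpace ℂ (Fin d), ‖z‖ < 1 → ‖w‖ < 1 →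
      (adjoint (kb z)) ∘L kb w
        = (1 - ⟪w, z⟫_ℂ)⁻¹ • ((1 : K →L[ℂ] K) - (b z) ∘L adjoint (b w)))
    (hspan : (⨆ z : {z : EuclideanSpace ℂ (Fin d) // ‖z‖ < 1},
        LinearMap.range (kb z.1 : K →ₗ[ℂ] Hb)).topologicalClosure = ⊤)
    (X : PiLp 2 (fun _ : Fin d => Hb) →L[ℂ] Hb) (hX : ‖X‖ ≤ 1) :
    (∀ z : EuclideanSpace ℂ (Fin d), ‖z‖ < 1 → ∀ f : Hb,
        ∑ j, z j • ((adjoint (kb z)) (((adjoint X) f) j))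
          = (adjoint (kb z)) f - (adjoint (kb 0)) f)
    ↔ (∀ z : EuclideanSpace ℂ (Fin d), ‖z‖ < 1 →
        (Ring.inverse (1 - X ∘L colOp z) : Hb →L[ℂ] Hb) ∘L kb 0 = kb z) :=
  stmt_15_general kb X hX

end
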